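/- arXiv:0712.3696 — 4 statements merged into one kernel-verified Lean document; each statement's English description precedes it below -/
import Mathlib

section
/- Assume the triangular array setting with assumptions (A1)(i), (A1)(ii) and (A2). Define φ^M(x) = x − ((x∧M)∨(−M)). Then for every ε > 0 the Lindeberg condition holds: σ_n^{−2} Σ_{i=−k_n}^{k_n} E[ (φ^{ε σ_n}(X_{n,i}))² ] → 0 as n → ∞. -/
open MeasureTheory ProbabilityTheory Filter Finset
open scoped ENNReal NNReal Topology BoundedContinuousFunction

noncomputable section

/-- The `θ₂` dependence coefficient of an `ℝ^m`-valued random variable `ξ` with respect to a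
sub-σ-algebra `ℳ`: the supremum over functions `f : ℝ^m → ℝ` that are `1`-Lipschitz for the
metric `d₁(x,y) = ∑ i, |x i - y i|` of `‖E(f(ξ)|ℳ) - E(f(ξ))‖₂`. -/
def theta2Coef {Ω : Type*} [MeasurableSpace Ω] (P : Measure Ω)
    (ℳ : MeasurableSpace Ω) {m : ℕ} (ξ : Ω → Fin m → ℝ) : ℝ :=
  sSup { r | ∃ f : (Fin m → ℝ) → ℝ, Measurable f ∧
      (∀ x y : Fin m → ℝ, |f x - f y| ≤ ∑ i, |x i - y i|) ∧
      r = (eLpNorm (fun ω => (P[(fun ω' => f (ξ ω')) | ℳ]) ω - ∫ ω', f (ξ ω') ∂P) 2 P).toReal }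

/-- The coefficient `θ_{k,2}(n)` of a sequence `(ξ_i)_{i ∈ ℤ}` with respect to σ-algebras
`(ℳ_i)_{i ∈ ℤ}`:
`max_{1 ≤ l ≤ k} (1/l) sup { θ₂(ℳ_p, (ξ_{j₁}, …, ξ_{j_l})) : p + n ≤ j₁ < … < j_l }`. -/
def thetaK2 {Ω : Type*} [MeasurableSpace Ω] (P : Measure Ω)
    (ℳ : ℤ → MeasurableSpace Ω) (ξ : ℤ → Ω → ℝ) (k n : ℕ) : ℝ :=
  sSup { r | ∃ l : ℕ, 1 ≤ l ∧ l ≤ k ∧ ∃ p : ℤ, ∃ j : Fin l → ℤ,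
      StrictMono j ∧ (∀ s, p + (n : ℤ) ≤ j s) ∧
      r = (1 / l : ℝ) * theta2Coef P (ℳ p) (fun ω s => ξ (j s) ω) }

/-- The coefficient `θ₂(n) = sup_{k ∈ ℕ*} θ_{k,2}(n)`. -/
def theta2Seq {Ω : Type*} [MeasurableSpace Ω] (P : Measure Ω)
    (ℳ : ℤ → MeasurableSpace Ω) (ξ : ℤ → Ω → ℝ) (n : ℕ) : ℝ :=
  sSup { r | ∃ k : ℕ, 1 ≤ k ∧ r = thetaK2 P ℳ ξ k n }

/-- The natural σ-algebras `ℳ_i = σ(ξ_j, j ≤ i)` of a sequence `(ξ_i)_{i ∈ ℤ}`. -/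
def natFilt {Ω : Type*} [MeasurableSpace Ω] (ξ : ℤ → Ω → ℝ) (i : ℤ) : MeasurableSpace Ω :=
  ⨆ j : ℤ, ⨆ _ : j ≤ i, MeasurableSpace.comap (ξ j) inferInstance

/-- Assumption (A3): the coefficient `θ₂(⬝)` is bounded above by a non-negative function `g`
such that `x ↦ x^{3/2} g(x)` is non-increasing (on positive reals) and
`∑_{i=0}^∞ 2^{3i/2} g(2^{iε}) < ∞` for some `0 < ε < 1`. -/
def A3cond (θ : ℕ → ℝ) : Prop :=
  ∃ g : ℝ → ℝ, (∀ x, 0 ≤ g x) ∧ (∀ n : ℕ, θ n ≤ g n) ∧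
    (∀ x y : ℝ, 0 < x → x ≤ y → y ^ (3 / 2 : ℝ) * g y ≤ x ^ (3 / 2 : ℝ) * g x) ∧
    ∃ ε : ℝ, 0 < ε ∧ ε < 1 ∧
      Summable (fun i : ℕ => (2 : ℝ) ^ ((3 * (i : ℝ)) / 2) * g ((2 : ℝ) ^ ((i : ℝ) * ε)))

/-! Clamping `y = a ξ` at level `M` changes it only where `|y| > M`, and there by at most `|y|`.
If `C a² ≤ M²`, then `|a ξ| > M` forces `ξ² > C`, so the squared clamping error is at most
`a² ξ² 1{ξ² ≥ C}`, whose expectation is at most `a² η` uniformly in the index by uniform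
integrability of the `ξ_i²`. By (A1)(ii), `C max_i a_{n,i}² ≤ (ε σ_n)²` for large `n`, so the
Lindeberg sum is at most `η ∑_i a_{n,i}²`, which (A1)(i) bounds by `η σ_n² / c` for
some `c > 0`. -/

lemma sq_sub_clamp_le_indicator {M : ℝ} (hM : 0 ≤ M) (y : ℝ) :
    (y - (y ⊓ M ⊔ -M)) ^ 2 ≤ {y | M < |y|}.indicator (· ^ 2) y := by
  by_cases hy : M < |y|
  · rw [Set.indicator_of_mem (s := {y | M < |y|}) hy]
    rcases lt_abs.mp hy with h | h
    · rw [min_eq_right (by linarith), max_eq_left (by linarith)]; nlinarith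
    · rw [min_eq_left (by linarith), max_eq_right (by linarith)]; nlinarith
  · rw [Set.indicator_of_notMem (s := {y | M < |y|}) hy]
    obtain ⟨h1, h2⟩ := abs_le.mp (not_lt.mp hy)
    rw [min_eq_left h2, max_eq_left h1, sub_self]; norm_num

lemma sq_sub_clamp_mul_le {M C a : ℝ} (hM : 0 ≤ M) (hC : C * a ^ 2 ≤ M ^ 2) (x : ℝ) :
    (a * x - (a * x ⊓ M ⊔ -M)) ^ 2 ≤ a ^ 2 * {x | C ≤ x ^ 2}.indicator (· ^ 2) x := by
  refine (sq_sub_clamp_le_indicator hM (a * x)).trans ?_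
  by_cases hax : M < |a * x|
  · have hsq : M ^ 2 < a ^ 2 * x ^ 2 := by
      rw [← mul_pow, ← sq_abs (a * x)]; exact pow_lt_pow_left₀ hax hM two_ne_zero
    have ha : 0 < a ^ 2 := (sq_nonneg a).lt_of_ne fun h => by
      rw [← h] at hsq; nlinarith [sq_nonneg M]
    have hx : C ≤ x ^ 2 := by nlinarith
    rw [Set.indicator_of_mem (s := {y | M < |y|}) hax,
      Set.indicator_of_mem (s := {x | C ≤ x ^ 2}) hx, mul_pow]
  · rw [Set.indicator_of_notMem (s := {y | M < |y|}) hax]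
    exact mul_nonneg (sq_nonneg a) (Set.indicator_nonneg (fun _ _ => sq_nonneg _) x)

/-- No integrability is needed: a non-integrable function has Bochner integral `0`. -/
lemma integral_le_toReal_eLpNorm_one {α : Type*} [MeasurableSpace α] {μ : Measure α}
    (f : α → ℝ) : ∫ x, f x ∂μ ≤ (eLpNorm f 1 μ).toReal := by
  rw [eLpNorm_one_eq_lintegral_enorm]
  refine (le_abs_self _).trans ((norm_integral_le_lintegral_norm f).trans_eq ?_)
  simp_rw [ofReal_norm]

lemma integral_sq_sub_clamp_mul_le {Ω : Type*} [MeasurableSpace Ω] {μ : Measure Ω}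
    {ξ : Ω → ℝ} {C : ℝ≥0} {a M η : ℝ} (hM : 0 ≤ M) (hC : C * a ^ 2 ≤ M ^ 2) (hη : 0 ≤ η)
    (htail : eLpNorm ({ω | C ≤ ‖ξ ω ^ 2‖₊}.indicator fun ω => ξ ω ^ 2) 1 μ ≤ ENNReal.ofReal η) :
    ∫ ω, (a * ξ ω - (a * ξ ω ⊓ M ⊔ -M)) ^ 2 ∂μ ≤ a ^ 2 * η := by
  set tail := {ω | C ≤ ‖ξ ω ^ 2‖₊}.indicator fun ω => ξ ω ^ 2
  have htail_eq : ∀ ω, tail ω = {x | (C : ℝ) ≤ x ^ 2}.indicator (· ^ 2) (ξ ω) := fun ω => by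
    simp only [tail, Set.indicator_apply, Set.mem_ofPred_eq, ← NNReal.coe_le_coe, coe_nnnorm,
      Real.norm_of_nonneg (sq_nonneg _)]
  have hnorm : eLpNorm (fun ω => (a * ξ ω - (a * ξ ω ⊓ M ⊔ -M)) ^ 2) 1 μ
      ≤ ENNReal.ofReal (a ^ 2 * η) := calc
    _ ≤ eLpNorm (a ^ 2 • tail) 1 μ := eLpNorm_mono_real fun ω => by
      rw [Real.norm_of_nonneg (sq_nonneg _), Pi.smul_apply, smul_eq_mul, htail_eq]
      exact sq_sub_clamp_mul_le hM hC (ξ ω)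
    _ = ‖a ^ 2‖ₑ * eLpNorm tail 1 μ := eLpNorm_const_smul _ _ _ _
    _ ≤ ENNReal.ofReal (a ^ 2) * ENNReal.ofReal η := by
      rw [Real.enorm_of_nonneg (sq_nonneg a)]; gcongr
    _ = ENNReal.ofReal (a ^ 2 * η) := (ENNReal.ofReal_mul (sq_nonneg a)).symm
  exact (integral_le_toReal_eLpNorm_one _).trans
    (ENNReal.toReal_le_of_le_ofReal (by positivity) hnorm)

lemma exists_pos_eventually_mul_le_of_liminf_div_pos {α : Type*} {l : Filter α} {u v : α → ℝ}
    (hu : ∀ n, 0 ≤ u n) (hv : ∀ n, 0 ≤ v n) (h : 0 < l.liminf fun n => v n / u n) :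
    ∃ c > 0, ∀ᶠ n in l, c * u n ≤ v n := by
  refine ⟨l.liminf (fun n => v n / u n) / 2, half_pos h, ?_⟩
  filter_upwards [eventually_lt_of_lt_liminf (half_lt_self h)
    (isBoundedUnder_of ⟨0, fun n => div_nonneg (hv n) (hu n)⟩)] with n hn
  exact mul_le_of_le_div₀ (hv n) (hu n) hn.le

lemma eventually_mul_sq_le_sq_of_tendsto_inv_mul {α : Type*} {l : Filter α} {σ A : α → ℝ}
    (h : Tendsto (fun n => (σ n)⁻¹ * A n) l (𝓝 0)) (K : ℝ) {ε : ℝ} (hε : 0 < ε) :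
    ∀ᶠ n in l, 0 < σ n → K * A n ^ 2 ≤ (ε * σ n) ^ 2 := by
  have hK : Tendsto (fun n => K * ((σ n)⁻¹ * A n) ^ 2) l (𝓝 0) := by
    simpa using (h.pow 2).const_mul K
  filter_upwards [hK.eventually (ge_mem_nhds (pow_pos hε 2))] with n hn hσ
  calc K * A n ^ 2 = K * ((σ n)⁻¹ * A n) ^ 2 * σ n ^ 2 := by field_simp
    _ ≤ ε ^ 2 * σ n ^ 2 := by gcongr
    _ = (ε * σ n) ^ 2 := (mul_pow _ _ _).symm

theorem lindeberg_condition_triangular_array_general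
    {Ω : Type*} [MeasurableSpace Ω] (P : Measure Ω)
    (ξ : ℤ → Ω → ℝ)
    (k : ℕ → ℕ)
    (a : ℕ → ℤ → ℝ)
    (Sn : ℕ → Ω → ℝ)
    (σ : ℕ → ℝ) (hσ : ∀ n, σ n = Real.sqrt (variance (Sn n) P))
    -- (A1)(i)
    (hA1i : 0 < atTop.liminf (fun n =>
      variance (Sn n) P / ∑ i ∈ Finset.Icc (-(k n : ℤ)) (k n : ℤ), (a n i) ^ 2))
    -- (A1)(ii)
    (hA1ii : Tendsto (fun n => (σ n)⁻¹ *
      (Finset.Icc (-(k n : ℤ)) (k n : ℤ)).sup'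
        (Finset.nonempty_Icc.mpr (neg_le_self (Int.natCast_nonneg _)))
        (fun i => |a n i|)) atTop (𝓝 0))
    -- (A2)
    (hA2 : UniformIntegrable (fun i ω => (ξ i ω) ^ 2) 1 P)
    :
    ∀ ε : ℝ, 0 < ε →
      Tendsto (fun n => ((σ n) ^ 2)⁻¹ *
        ∑ i ∈ Finset.Icc (-(k n : ℤ)) (k n : ℤ),
          ∫ ω, (a n i * ξ i ω - ((a n i * ξ i ω ⊓ ε * σ n) ⊔ (-(ε * σ n)))) ^ 2 ∂P)
        atTop (𝓝 0) := by
  intro ε hε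
  obtain ⟨c, hc, hcV⟩ := exists_pos_eventually_mul_le_of_liminf_div_pos
    (fun n => sum_nonneg fun i _ => sq_nonneg (a n i)) (fun n => variance_nonneg _ _) hA1i
  refine tendsto_order.2 ⟨fun b hb => Eventually.of_forall fun n => hb.trans_le <|
    mul_nonneg (by positivity) (sum_nonneg fun i _ => integral_nonneg fun ω => sq_nonneg _),
    fun b hb => ?_⟩
  obtain ⟨C, hC⟩ := hA2.spec one_ne_zero ENNReal.one_ne_top (by positivity : 0 < c * b / 2)
  filter_upwards [hcV, eventually_mul_sq_le_sq_of_tendsto_inv_mul hA1ii C hε] with n hcn hAn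
  rcases (hσ n ▸ Real.sqrt_nonneg _ : 0 ≤ σ n).eq_or_lt with hσ0 | hσpos
  · simpa [← hσ0] using hb
  have hσ2 : σ n ^ 2 = variance (Sn n) P := by rw [hσ n, Real.sq_sqrt (variance_nonneg _ _)]
  have hCa : ∀ i ∈ Icc (-(k n : ℤ)) (k n : ℤ), (C : ℝ) * a n i ^ 2 ≤ (ε * σ n) ^ 2 :=
    fun i hi => (hAn hσpos).trans' <| mul_le_mul_of_nonneg_left ((sq_abs (a n i)).symm.le.trans
      (pow_le_pow_left₀ (abs_nonneg _) (le_sup' (fun i => |a n i|) hi) 2)) C.2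
  have hsum := sum_le_sum fun i hi => integral_sq_sub_clamp_mul_le (ξ := ξ i) (μ := P)
    (by positivity) (hCa i hi) (by positivity) (hC i)
  rw [← sum_mul] at hsum
  calc _ ≤ (σ n ^ 2)⁻¹ * ((∑ i ∈ Icc (-(k n : ℤ)) (k n : ℤ), a n i ^ 2) * (c * b / 2)) := by
        gcongr
    _ ≤ b / 2 := by
      rw [inv_mul_le_iff₀ (by positivity), hσ2]; nlinarith
    _ < b := half_lt_self hb

/-- **Lindeberg condition.** In the triangular array setting, under (A1)(i), (A1)(ii) and (A2),
for every `ε > 0`, with `φ^M(x) = x - ((x ∧ M) ∨ (-M))`,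
`σ_n^{-2} ∑_{i=-k_n}^{k_n} E[(φ^{ε σ_n}(X_{n,i}))²] → 0` as `n → ∞`. -/
theorem lindeberg_condition_triangular_array
    {Ω : Type*} [MeasurableSpace Ω] (P : Measure Ω) [IsProbabilityMeasure P]
    (ξ : ℤ → Ω → ℝ)
    (hmeas : ∀ i, Measurable (ξ i))
    (hL2 : ∀ i, MemLp (ξ i) 2 P)
    (hcen : ∀ i, ∫ ω, ξ i ω ∂P = 0)
    (hnonconst : ∀ i, 0 < variance (ξ i) P)
    (k : ℕ → ℕ) (hkmono : Monotone k) (hkpos : ∀ n, 0 < k n)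
    (hktop : Tendsto k atTop atTop)
    (a : ℕ → ℤ → ℝ)
    (ha : ∀ n, 0 < ∑ i ∈ Finset.Icc (-(k n : ℤ)) (k n : ℤ), (a n i) ^ 2)
    (Sn : ℕ → Ω → ℝ)
    (hSn : ∀ n ω, Sn n ω = ∑ i ∈ Finset.Icc (-(k n : ℤ)) (k n : ℤ), a n i * ξ i ω)
    (σ : ℕ → ℝ) (hσ : ∀ n, σ n = Real.sqrt (variance (Sn n) P))
    -- (A1)(i)
    (hA1i : 0 < atTop.liminf (fun n =>
      variance (Sn n) P / ∑ i ∈ Finset.Icc (-(k n : ℤ)) (k n : ℤ), (a n i) ^ 2))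
    -- (A1)(ii)
    (hA1ii : Tendsto (fun n => (σ n)⁻¹ *
      (Finset.Icc (-(k n : ℤ)) (k n : ℤ)).sup'
        (Finset.nonempty_Icc.mpr (neg_le_self (Int.natCast_nonneg _)))
        (fun i => |a n i|)) atTop (𝓝 0))
    -- (A2)
    (hA2 : UniformIntegrable (fun i ω => (ξ i ω) ^ 2) 1 P)
    :
    ∀ ε : ℝ, 0 < ε →
      Tendsto (fun n => ((σ n) ^ 2)⁻¹ *
        ∑ i ∈ Finset.Icc (-(k n : ℤ)) (k n : ℤ),
          ∫ ω, (a n i * ξ i ω - ((a n i * ξ i ω ⊓ ε * σ n) ⊔ (-(ε * σ n)))) ^ 2 ∂P)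
        atTop (𝓝 0) :=
  lindeberg_condition_triangular_array_general P ξ k a Sn σ hσ hA1i hA1ii hA2
end
end

section
/- In the random-walk sampling setting, let f ∈ L²(μ) be non-negative with Σ_{x∈ℤ} G(0,x) E_μ(f · f∘T^x) < +∞. Then (1/n) E_ℙ[ E_μ | Σ_{k=0}^n f∘T^{S_k} |² ] converges, as n → ∞, to 2 Σ_{x∈ℤ} G(0,x) E_μ(f · f∘T^x) − E_μ(f²). -/
open MeasureTheory ProbabilityTheory Filter Finset
open scoped ENNReal NNReal Topology BoundedContinuousFunction

noncomputable section

/-! Write `φ(x) = E_μ(f · f∘T^x)`. As `T` preserves `μ`, `E_μ(f∘T^a · f∘T^b) = φ(b - a)`, so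
the inner integral is `∑_{m,m' ≤ n} φ(S_{m'} - S_m)`. Since `φ` is even and the increments of
the walk are stationary, its `ℙ`-mean is the Toeplitz sum `∑_{m,m' ≤ n} a_{|m' - m|}` with
`a_d = E_ℙ φ(S_d)`, and `a_0 = E_μ(f²)`. By Tonelli `∑_d a_d = ∑_x G(0,x) φ(x)`, and by
Kronecker's lemma the Toeplitz sums of a summable sequence grow like `n (2 ∑_d a_d - a_0)`. -/

-- Kronecker's lemma, from Abel summation and Cesàro means of the partial sums.
theorem tendsto_inv_mul_sum_range_mul_of_summable {b : ℕ → ℝ} (hb : Summable b) :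
    Tendsto (fun n : ℕ => (n : ℝ)⁻¹ * ∑ k ∈ range n, (k : ℝ) * b k) atTop (𝓝 0) := by
  have abel : ∀ n : ℕ, ∑ k ∈ range n, (k : ℝ) * b k
      = n * ∑ k ∈ range n, b k - ∑ j ∈ range n, ∑ k ∈ range (j + 1), b k := by
    intro n
    induction n with
    | zero => simp
    | succ n ih =>
      rw [sum_range_succ, ih, sum_range_succ (fun j => ∑ k ∈ range (j + 1), b k),
        sum_range_succ b]
      push_cast
      ring
  have hpartial := hb.hasSum.tendsto_sum_nat
  have hcesaro := (hpartial.comp (tendsto_add_atTop_nat 1)).cesaro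
  have h := hpartial.sub hcesaro
  rw [sub_self] at h
  refine h.congr' ?_
  filter_upwards [eventually_ne_atTop 0] with n hn
  rw [abel, mul_sub, inv_mul_cancel_left₀ (Nat.cast_ne_zero.2 hn)]
  rfl

theorem sum_range_sum_range_natAbs_sub (g : ℕ → ℝ) (N : ℕ) :
    ∑ m ∈ range N, ∑ m' ∈ range N, g ((m' : ℤ) - m).natAbs
      = 2 * ∑ d ∈ range N, ((N : ℝ) - d) * g d - N * g 0 := by
  induction N with
  | zero => simp
  | succ N ih =>
    have hrow : ∑ m ∈ range N, g ((N : ℤ) - m).natAbs = ∑ d ∈ range N, g (d + 1) := by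
      rw [← sum_range_reflect]
      refine sum_congr rfl fun d hd => congrArg g ?_
      have := mem_range.1 hd
      omega
    have hcol : ∑ m' ∈ range N, g ((m' : ℤ) - N).natAbs = ∑ d ∈ range N, g (d + 1) :=
      hrow ▸ sum_congr rfl fun m _ => congrArg g (by omega)
    have hweights : ∑ d ∈ range N, (((N + 1 : ℕ) : ℝ) - d) * g d
        = ∑ d ∈ range N, ((N : ℝ) - d) * g d + ∑ d ∈ range N, g d := by
      rw [← sum_add_distrib]
      exact sum_congr rfl fun d _ => by push_cast; ring
    have hshift := sum_range_succ' g N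
    rw [sum_range_succ] at hshift
    simp only [sum_range_succ _ N, sum_add_distrib, ih, hrow, hcol, hweights, sub_self,
      Int.natAbs_zero]
    push_cast
    linarith

theorem tendsto_inv_mul_sum_range_sum_range_natAbs_sub {a : ℕ → ℝ} {L : ℝ}
    (ha : HasSum a L) :
    Tendsto
      (fun N : ℕ => (N : ℝ)⁻¹ * ∑ m ∈ range N, ∑ m' ∈ range N, a ((m' : ℤ) - m).natAbs)
      atTop (𝓝 (2 * L - a 0)) := by
  have h := ((ha.tendsto_sum_nat.sub
    (tendsto_inv_mul_sum_range_mul_of_summable ha.summable)).const_mul 2).sub_const (a 0)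
  rw [sub_zero] at h
  refine h.congr' ?_
  filter_upwards [eventually_ne_atTop 0] with N hN
  have hN' : (N : ℝ) ≠ 0 := Nat.cast_ne_zero.2 hN
  simp only [sum_range_sum_range_natAbs_sub, sub_mul, sum_sub_distrib, ← mul_sum]
  field_simp

theorem Filter.Tendsto.inv_mul_apply_succ {u : ℕ → ℝ} {c : ℝ}
    (h : Tendsto (fun N : ℕ => (N : ℝ)⁻¹ * u N) atTop (𝓝 c)) :
    Tendsto (fun n : ℕ => (n : ℝ)⁻¹ * u (n + 1)) atTop (𝓝 c) := by
  have hratio : Tendsto (fun n : ℕ => 1 + (n : ℝ)⁻¹) atTop (𝓝 1) := by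
    simpa using (tendsto_const_nhds (x := (1 : ℝ))).add tendsto_inv_atTop_nhds_zero_nat
  have h' := hratio.mul (h.comp (tendsto_add_atTop_nat 1))
  rw [one_mul] at h'
  refine h'.congr' ?_
  filter_upwards [eventually_ne_atTop 0] with n hn
  have hn' : (n : ℝ) ≠ 0 := Nat.cast_ne_zero.2 hn
  simp only [Function.comp_apply]
  push_cast
  field_simp

namespace Equiv.Perm

variable {E : Type*} [MeasurableSpace E] {μ : Measure E} {T : Equiv.Perm E}

theorem measurePreserving_zpow (hT : Measurable T) (hTinv : Measurable T.symm)
    (hTpres : MeasurePreserving T μ μ) (x : ℤ) : MeasurePreserving ⇑(T ^ x) μ μ := by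
  have hTsymm : MeasurePreserving T.symm μ μ := hTpres.symm ⟨T, hT, hTinv⟩
  induction x using Int.induction_on with
  | zero => exact MeasurePreserving.id μ
  | succ n ih => rw [zpow_add_one, coe_mul]; exact ih.comp hTpres
  | pred n ih => rw [zpow_sub_one, coe_mul, inv_def]; exact ih.comp hTsymm

theorem integral_comp_zpow {F : Type*} [NormedAddCommGroup F] [NormedSpace ℝ F]
    (hT : Measurable T) (hTinv : Measurable T.symm) (hTpres : MeasurePreserving T μ μ)
    (g : E → F) (x : ℤ) : ∫ e, g ((T ^ x) e) ∂μ = ∫ e, g e ∂μ := by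
  have hsymm : Measurable ⇑(T ^ x).symm := by
    simpa [zpow_neg, inv_def] using (measurePreserving_zpow hT hTinv hTpres (-x)).measurable
  exact (measurePreserving_zpow hT hTinv hTpres x).integral_comp
    (MeasurableEquiv.mk (T ^ x) (measurePreserving_zpow hT hTinv hTpres x).measurable
      hsymm).measurableEmbedding g

end Equiv.Perm

def autocorrelation {E : Type*} [MeasurableSpace E] (μ : Measure E) (T : Equiv.Perm E)
    (f : E → ℝ) (x : ℤ) : ℝ :=
  ∫ e, f e * f ((T ^ x) e) ∂μ

section Autocorrelation

variable {E : Type*} [MeasurableSpace E] {μ : Measure E} {T : Equiv.Perm E} {f : E → ℝ}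

theorem autocorrelation_zero : autocorrelation μ T f 0 = ∫ e, f e ^ 2 ∂μ := by
  simp [autocorrelation, sq]

theorem autocorrelation_nonneg (hf : ∀ e, 0 ≤ f e) (x : ℤ) : 0 ≤ autocorrelation μ T f x :=
  integral_nonneg fun e => mul_nonneg (hf e) (hf _)

theorem integral_comp_zpow_mul_comp_zpow (hT : Measurable T) (hTinv : Measurable T.symm)
    (hTpres : MeasurePreserving T μ μ) (f : E → ℝ) (a b : ℤ) :
    ∫ e, f ((T ^ a) e) * f ((T ^ b) e) ∂μ = autocorrelation μ T f (b - a) := by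
  have hshift : ∀ e, (T ^ b) e = (T ^ (b - a)) ((T ^ a) e) := fun _ => by
    rw [← Equiv.Perm.mul_apply, ← zpow_add, sub_add_cancel]
  simp_rw [hshift]
  exact Equiv.Perm.integral_comp_zpow hT hTinv hTpres (fun e => f e * f ((T ^ (b - a)) e)) a

theorem autocorrelation_neg (hT : Measurable T) (hTinv : Measurable T.symm)
    (hTpres : MeasurePreserving T μ μ) (x : ℤ) :
    autocorrelation μ T f (-x) = autocorrelation μ T f x := by
  rw [← zero_sub, ← integral_comp_zpow_mul_comp_zpow hT hTinv hTpres f x 0]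
  simp [autocorrelation, mul_comm]

theorem abs_autocorrelation_le (hT : Measurable T) (hTinv : Measurable T.symm)
    (hTpres : MeasurePreserving T μ μ) (hf : MemLp f 2 μ) (x : ℤ) :
    |autocorrelation μ T f x| ≤ autocorrelation μ T f 0 := by
  have hfx : MemLp (fun e => f ((T ^ x) e)) 2 μ :=
    hf.comp_measurePreserving (Equiv.Perm.measurePreserving_zpow hT hTinv hTpres x)
  have hbound : ∀ u v : ℝ, ‖u * v‖ ≤ (u ^ 2 + v ^ 2) / 2 := fun u v => by
    rw [Real.norm_eq_abs, abs_mul, ← sq_abs u, ← sq_abs v]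
    nlinarith [two_mul_le_add_sq |u| |v|]
  have hint : Integrable (fun e => (f e ^ 2 + f ((T ^ x) e) ^ 2) / 2) μ :=
    (hf.integrable_sq.add hfx.integrable_sq).div_const 2
  calc |autocorrelation μ T f x| ≤ ∫ e, (f e ^ 2 + f ((T ^ x) e) ^ 2) / 2 ∂μ :=
        norm_integral_le_of_norm_le hint (ae_of_all _ fun e => hbound _ _)
    _ = autocorrelation μ T f 0 := by
        rw [integral_div, integral_add hf.integrable_sq hfx.integrable_sq,
          Equiv.Perm.integral_comp_zpow hT hTinv hTpres (fun e => f e ^ 2), autocorrelation_zero]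
        ring

theorem integral_sq_sum_comp_zpow (hT : Measurable T) (hTinv : Measurable T.symm)
    (hTpres : MeasurePreserving T μ μ) (hf : MemLp f 2 μ) {ι : Type*} (s : Finset ι)
    (y : ι → ℤ) :
    ∫ e, (∑ i ∈ s, f ((T ^ y i) e)) ^ 2 ∂μ
      = ∑ i ∈ s, ∑ j ∈ s, autocorrelation μ T f (y j - y i) := by
  have hmem : ∀ i, MemLp (fun e => f ((T ^ y i) e)) 2 μ := fun i =>
    hf.comp_measurePreserving (Equiv.Perm.measurePreserving_zpow hT hTinv hTpres (y i))
  have hint : ∀ i j, Integrable (fun e => f ((T ^ y i) e) * f ((T ^ y j) e)) μ :=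
    fun i j => (hmem i).integrable_mul (hmem j)
  simp_rw [sq, sum_mul_sum]
  rw [integral_finsetSum _ fun i _ => integrable_finsetSum _ fun j _ => hint i j]
  refine sum_congr rfl fun i _ => ?_
  rw [integral_finsetSum _ fun j _ => hint i j]
  exact sum_congr rfl fun j _ => integral_comp_zpow_mul_comp_zpow hT hTinv hTpres f (y i) (y j)

end Autocorrelation

section GreenFunction

variable {Ω : Type*} [MeasurableSpace Ω]

def greenFunction (P : Measure Ω) (Y : ℕ → Ω → ℤ) (x : ℤ) : ℝ :=
  ∑' m, (P {ω | Y m ω = x}).toReal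

theorem greenFunction_nonneg (P : Measure Ω) (Y : ℕ → Ω → ℤ) (x : ℤ) :
    0 ≤ greenFunction P Y x :=
  tsum_nonneg fun _ => ENNReal.toReal_nonneg

theorem hasSum_integral_comp_of_summable_greenFunction {P : Measure Ω} [IsFiniteMeasure P]
    {Y : ℕ → Ω → ℤ} (hY : ∀ m, Measurable (Y m)) {ψ : ℤ → ℝ} (hψ : ∀ x, 0 ≤ ψ x)
    (hGreen : ∀ x, Summable fun m => (P {ω | Y m ω = x}).toReal)
    (hsum : Summable fun x => greenFunction P Y x * ψ x) :
    HasSum (fun m => ∫ ω, ψ (Y m ω) ∂P) (∑' x, greenFunction P Y x * ψ x) := by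
  let A : ℕ → ℝ≥0∞ := fun m => ∫⁻ ω, ENNReal.ofReal (ψ (Y m ω)) ∂P
  have hA : ∀ m, A m = ∑' x, ENNReal.ofReal (ψ x) * P {ω | Y m ω = x} := fun m => by
    change ∫⁻ ω, ENNReal.ofReal (ψ (Y m ω)) ∂P = _
    rw [← lintegral_map (f := fun x => ENNReal.ofReal (ψ x)) (measurable_of_countable _) (hY m),
      lintegral_countable']
    exact tsum_congr fun x => by rw [Measure.map_apply (hY m) (measurableSet_singleton x)]; rfl
  have hgreen : ∀ x, ∑' m, P {ω | Y m ω = x}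
      = ENNReal.ofReal (greenFunction P Y x) := fun x => by
    rw [greenFunction, ENNReal.ofReal_tsum_of_nonneg (fun _ => ENNReal.toReal_nonneg) (hGreen x)]
    exact tsum_congr fun m => (ENNReal.ofReal_toReal (measure_ne_top P _)).symm
  have htonelli : ∑' m, A m = ENNReal.ofReal (∑' x, greenFunction P Y x * ψ x) := by
    simp_rw [hA]
    rw [ENNReal.tsum_comm, ENNReal.ofReal_tsum_of_nonneg
      (fun x => mul_nonneg (greenFunction_nonneg P Y x) (hψ x)) hsum]
    refine tsum_congr fun x => ?_
    rw [ENNReal.tsum_mul_left, hgreen, ENNReal.ofReal_mul (greenFunction_nonneg P Y x), mul_comm]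
  have hA_ne_top : ∑' m, A m ≠ ∞ := htonelli ▸ ENNReal.ofReal_ne_top
  have hintegral : ∀ m, ∫ ω, ψ (Y m ω) ∂P = (A m).toReal := fun m =>
    integral_eq_lintegral_of_nonneg_ae (ae_of_all _ fun _ => hψ _)
      ((measurable_of_countable ψ).comp (hY m)).aestronglyMeasurable
  simp_rw [hintegral]
  convert ENNReal.hasSum_toReal hA_ne_top
  rw [← ENNReal.tsum_toReal_eq (ENNReal.ne_top_of_tsum_ne_top hA_ne_top), htonelli,
    ENNReal.toReal_ofReal (tsum_nonneg fun x => mul_nonneg (greenFunction_nonneg P Y x) (hψ x))]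

end GreenFunction

section RandomWalk

variable {Ω : Type*} [MeasurableSpace Ω] {P : Measure Ω} [IsProbabilityMeasure P]
  {X : ℕ → Ω → ℤ} {S : ℕ → Ω → ℤ}

theorem ProbabilityTheory.iIndepFun.map_block_eq_pi (hXindep : iIndepFun X P)
    (hXmeas : ∀ i, Measurable (X i)) (hXident : ∀ i, P.map (X i) = P.map (X 0)) (m d : ℕ) :
    P.map (fun ω (i : Fin d) => X (m + i) ω) = Measure.pi fun _ => P.map (X 0) := by
  have hblock : iIndepFun (fun i : Fin d => X (m + i)) P :=
    hXindep.precomp (g := fun i : Fin d => m + i) fun i j h => Fin.ext (by simpa using h)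
  rw [(iIndepFun_iff_map_fun_eq_pi_map fun i => (hXmeas _).aemeasurable).1 hblock]
  simp_rw [hXident]

theorem identDistrib_sum_range_add (hXindep : iIndepFun X P) (hXmeas : ∀ i, Measurable (X i))
    (hXident : ∀ i, P.map (X i) = P.map (X 0)) (m d : ℕ) :
    IdentDistrib (fun ω => ∑ i ∈ range d, X (m + i) ω) (fun ω => ∑ i ∈ range d, X i ω)
      P P := by
  have hblock : IdentDistrib (fun ω (i : Fin d) => X (m + i) ω)
      (fun ω (i : Fin d) => X (0 + i) ω) P P :=
    { aemeasurable_fst := (measurable_pi_lambda _ fun _ => hXmeas _).aemeasurable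
      aemeasurable_snd := (measurable_pi_lambda _ fun _ => hXmeas _).aemeasurable
      map_eq := by
        rw [hXindep.map_block_eq_pi hXmeas hXident, hXindep.map_block_eq_pi hXmeas hXident] }
  have hsum : Measurable fun v : Fin d → ℤ => ∑ i, v i := by fun_prop
  convert hblock.comp hsum using 1 <;> funext ω
  · exact (Fin.sum_univ_eq_sum_range (fun i => X (m + i) ω) d).symm
  · simp only [Function.comp_apply, zero_add]
    exact (Fin.sum_univ_eq_sum_range (fun i => X i ω) d).symm

theorem measurable_walk (hXmeas : ∀ i, Measurable (X i))
    (hS : ∀ n ω, S n ω = ∑ i ∈ range n, X i ω) (n : ℕ) : Measurable (S n) := by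
  simp_rw [funext (hS n)]
  fun_prop

theorem identDistrib_walk_sub (hXindep : iIndepFun X P) (hXmeas : ∀ i, Measurable (X i))
    (hXident : ∀ i, P.map (X i) = P.map (X 0)) (hS : ∀ n ω, S n ω = ∑ i ∈ range n, X i ω)
    (m d : ℕ) : IdentDistrib (fun ω => S (m + d) ω - S m ω) (S d) P P := by
  have hincr : (fun ω => S (m + d) ω - S m ω) = fun ω => ∑ i ∈ range d, X (m + i) ω := by
    funext ω
    rw [hS, hS, sum_range_add, add_sub_cancel_left]
  rw [hincr, funext (hS d)]
  exact identDistrib_sum_range_add hXindep hXmeas hXident m d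

theorem integral_comp_walk_sub (hXindep : iIndepFun X P) (hXmeas : ∀ i, Measurable (X i))
    (hXident : ∀ i, P.map (X i) = P.map (X 0)) (hS : ∀ n ω, S n ω = ∑ i ∈ range n, X i ω)
    {ψ : ℤ → ℝ} (hψ : ∀ x, ψ (-x) = ψ x) (m m' : ℕ) :
    ∫ ω, ψ (S m' ω - S m ω) ∂P = ∫ ω, ψ (S ((m' : ℤ) - m).natAbs ω) ∂P := by
  have hincr : ∀ k d : ℕ, ∫ ω, ψ (S (k + d) ω - S k ω) ∂P = ∫ ω, ψ (S d ω) ∂P :=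
    fun k d => ((identDistrib_walk_sub hXindep hXmeas hXident hS k d).comp
      (measurable_of_countable ψ)).integral_eq
  rcases le_total m m' with h | h
  · obtain ⟨d, rfl⟩ := Nat.exists_eq_add_of_le h
    rw [hincr, show (((m + d : ℕ) : ℤ) - m).natAbs = d by omega]
  · obtain ⟨d, rfl⟩ := Nat.exists_eq_add_of_le h
    simp_rw [← hψ (S m' _ - S (m' + d) _), neg_sub]
    rw [hincr, show ((m' : ℤ) - (m' + d : ℕ)).natAbs = d by omega]

end RandomWalk

theorem integral_integral_sq_sum_comp_zpow_walk {E : Type*} [MeasurableSpace E] {μ : Measure E}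
    {T : Equiv.Perm E} (hT : Measurable T) (hTinv : Measurable T.symm)
    (hTpres : MeasurePreserving T μ μ) {f : E → ℝ} (hf : MemLp f 2 μ)
    {Ω : Type*} [MeasurableSpace Ω] {P : Measure Ω} [IsProbabilityMeasure P]
    {X : ℕ → Ω → ℤ} (hXindep : iIndepFun X P) (hXmeas : ∀ i, Measurable (X i))
    (hXident : ∀ i, P.map (X i) = P.map (X 0))
    {S : ℕ → Ω → ℤ} (hS : ∀ n ω, S n ω = ∑ i ∈ range n, X i ω) (N : ℕ) :
    ∫ ω, (∫ e, (∑ m ∈ range N, f ((T ^ S m ω) e)) ^ 2 ∂μ) ∂P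
      = ∑ m ∈ range N, ∑ m' ∈ range N,
          ∫ ω, autocorrelation μ T f (S ((m' : ℤ) - m).natAbs ω) ∂P := by
  have hint : ∀ m m', Integrable (fun ω => autocorrelation μ T f (S m' ω - S m ω)) P :=
    fun m m' => .of_bound
      ((measurable_of_countable (autocorrelation μ T f)).comp ((measurable_walk hXmeas hS m').sub
        (measurable_walk hXmeas hS m))).aestronglyMeasurable
      _ (ae_of_all _ fun _ => abs_autocorrelation_le hT hTinv hTpres hf _)
  simp_rw [integral_sq_sum_comp_zpow hT hTinv hTpres hf]
  rw [integral_finsetSum _ fun m _ => integrable_finsetSum _ fun m' _ => hint m m']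
  refine sum_congr rfl fun m _ => ?_
  rw [integral_finsetSum _ fun m' _ => hint m m']
  exact sum_congr rfl fun m' _ => integral_comp_walk_sub hXindep hXmeas hXident hS
    (autocorrelation_neg hT hTinv hTpres) m m'

theorem mean_variance_sampled_sum_tendsto_general
    {E : Type*} [MeasurableSpace E] (μ : Measure E)
    (T : Equiv.Perm E) (hT : Measurable T) (hTinv : Measurable T.symm)
    (hTpres : MeasurePreserving T μ μ)
    {Ω : Type*} [MeasurableSpace Ω] (P : Measure Ω) [IsProbabilityMeasure P]
    (X : ℕ → Ω → ℤ) (hXmeas : ∀ i, Measurable (X i))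
    (hXindep : iIndepFun X P)
    (hXident : ∀ i, Measure.map (X i) P = Measure.map (X 0) P)
    (S : ℕ → Ω → ℤ) (hS : ∀ n ω, S n ω = ∑ i ∈ Finset.range n, X i ω)
    -- transience: the Green function `G(0,x) = ∑_k ℙ(S_k = x)` is finite
    (hGreen : ∀ x : ℤ, Summable (fun m : ℕ => (P {ω | S m ω = x}).toReal))
    (G : ℤ → ℝ) (hG : ∀ x : ℤ, G x = ∑' m : ℕ, (P {ω | S m ω = x}).toReal)
    (f : E → ℝ) (hfL2 : MemLp f 2 μ)
    (hfpos : ∀ e, 0 ≤ f e)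
    (hsum : Summable (fun x : ℤ => G x * ∫ e, f e * f ((T ^ x) e) ∂μ)) :
    Tendsto (fun n : ℕ => (n : ℝ)⁻¹ *
        ∫ ω, (∫ e, (∑ m ∈ Finset.range (n + 1), f ((T ^ (S m ω)) e)) ^ 2 ∂μ) ∂P)
      atTop
      (𝓝 (2 * ∑' x : ℤ, G x * ∫ e, f e * f ((T ^ x) e) ∂μ - ∫ e, (f e) ^ 2 ∂μ)) := by
  obtain rfl : G = greenFunction P S := funext hG
  have hmean : HasSum (fun d => ∫ ω, autocorrelation μ T f (S d ω) ∂P)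
      (∑' x, greenFunction P S x * autocorrelation μ T f x) :=
    hasSum_integral_comp_of_summable_greenFunction (measurable_walk hXmeas hS)
      (autocorrelation_nonneg hfpos) hGreen hsum
  have hmean_zero : ∫ ω, autocorrelation μ T f (S 0 ω) ∂P = ∫ e, f e ^ 2 ∂μ := by
    simp [hS, autocorrelation_zero]
  rw [← hmean_zero]
  refine (tendsto_inv_mul_sum_range_sum_range_natAbs_sub hmean).inv_mul_apply_succ.congr
    fun n => ?_
  rw [integral_integral_sq_sum_comp_zpow_walk hT hTinv hTpres hfL2 hXindep hXmeas hXident hS]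

/-- In the random-walk sampling setting, for non-negative `f ∈ L²(μ)` with
`∑_{x∈ℤ} G(0,x) E_μ(f ⬝ f∘T^x) < ∞`,
`n⁻¹ E_ℙ[E_μ |∑_{k=0}^n f∘T^{S_k}|²]` converges to
`2 ∑_{x∈ℤ} G(0,x) E_μ(f ⬝ f∘T^x) - E_μ(f²)` as `n → ∞`. -/
theorem mean_variance_sampled_sum_tendsto
    {E : Type*} [MeasurableSpace E] (μ : Measure E) [IsProbabilityMeasure μ]
    (T : Equiv.Perm E) (hT : Measurable T) (hTinv : Measurable T.symm)
    (hTpres : MeasurePreserving T μ μ)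
    {Ω : Type*} [MeasurableSpace Ω] (P : Measure Ω) [IsProbabilityMeasure P]
    (X : ℕ → Ω → ℤ) (hXmeas : ∀ i, Measurable (X i))
    (hXindep : iIndepFun X P)
    (hXident : ∀ i, Measure.map (X i) P = Measure.map (X 0) P)
    (S : ℕ → Ω → ℤ) (hS : ∀ n ω, S n ω = ∑ i ∈ Finset.range n, X i ω)
    -- transience: the Green function `G(0,x) = ∑_k ℙ(S_k = x)` is finite
    (hGreen : ∀ x : ℤ, Summable (fun m : ℕ => (P {ω | S m ω = x}).toReal))
    (G : ℤ → ℝ) (hG : ∀ x : ℤ, G x = ∑' m : ℕ, (P {ω | S m ω = x}).toReal)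
    (f : E → ℝ) (hf : Measurable f) (hfL2 : MemLp f 2 μ)
    (hfpos : ∀ e, 0 ≤ f e)
    (hsum : Summable (fun x : ℤ => G x * ∫ e, f e * f ((T ^ x) e) ∂μ)) :
    Tendsto (fun n : ℕ => (n : ℝ)⁻¹ *
        ∫ ω, (∫ e, (∑ m ∈ Finset.range (n + 1), f ((T ^ (S m ω)) e)) ^ 2 ∂μ) ∂P)
      atTop
      (𝓝 (2 * ∑' x : ℤ, G x * ∫ e, f e * f ((T ^ x) e) ∂μ - ∫ e, (f e) ^ 2 ∂μ)) :=
  mean_variance_sampled_sum_tendsto_general μ T hT hTinv hTpres P X hXmeas hXindep hXident S hS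
    hGreen G hG f hfL2 hfpos hsum
end
end

section
/- Let (ε_i)_{i∈ℤ} be a stationary sequence of random variables with values in a measurable space S, and let H be a measurable function on a subset of S^ℕ such that ξ_n = H(ε_n, ε_{n−1}, ε_{n−2}, …) is defined almost surely and is square-integrable (a causal function of (ε_i)). Suppose there exists a stationary sequence (ε'_i)_{i∈ℤ} distributed as (ε_i)_{i∈ℤ} and independent of (ε_i)_{i≤0}, and set ξ*_n = H(ε'_n, ε'_{n−1}, ε'_{n−2}, …). Let ℳ_i = σ(ξ_j, j ≤ i), and let (δ₂(i))_{i>0} be a non-increasing sequence such that ‖E(|ξ_i − ξ*_i| | ℳ₀)‖₂ ≤ δ₂(i) for all i > 0. Then the coefficient θ₂ of the sequence (ξ_n) satisfies θ₂(i) ≤ δ₂(i) for all i ≥ 1. -/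
open MeasureTheory ProbabilityTheory Filter Finset
open scoped ENNReal NNReal Topology BoundedContinuousFunction

noncomputable section

/-!
Stationarity of `(ε_i)` makes `(ξ_i)` stationary, so conditioning on `ℳ_p` can be moved to
`ℳ_0` by a shift of time. At time `0` the copy `ξ*` is independent of `ℳ_0` and has the law of
`ξ`, hence `E(f(ξ_J) | ℳ_0) - E f(ξ_J) = E(f(ξ_J) - f(ξ*_J) | ℳ_0)` almost surely. Since `f` is
`1`-Lipschitz for `d₁`, this is dominated by `∑_s E(|ξ_{j_s} - ξ*_{j_s}| | ℳ_0)`, and each term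
has `L²` norm at most `δ₂(j_s - p) ≤ δ₂(n)`.
-/

section CondExpComp

variable {Ω X : Type*} {𝒢 : MeasurableSpace X} [MeasurableSpace Ω] [mX : MeasurableSpace X]
  {μ : Measure Ω} [IsFiniteMeasure μ] {Φ : Ω → X} {F : X → ℝ}

theorem condExp_comp_ae_eq (hΦ : Measurable Φ) (h𝒢 : 𝒢 ≤ mX) (hF : Integrable F (μ.map Φ)) :
    (fun ω => (μ.map Φ)[F|𝒢] (Φ ω)) =ᵐ[μ] μ[fun ω => F (Φ ω) | 𝒢.comap Φ] := by
  have hm : 𝒢.comap Φ ≤ ‹MeasurableSpace Ω› := (MeasurableSpace.comap_mono h𝒢).trans hΦ.comap_le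
  have hcond : AEStronglyMeasurable ((μ.map Φ)[F|𝒢]) (μ.map Φ) :=
    (stronglyMeasurable_condExp.mono h𝒢).aestronglyMeasurable
  refine ae_eq_condExp_of_forall_setIntegral_eq hm
    ((integrable_map_measure hF.1 hΦ.aemeasurable).mp hF)
    (fun s _ _ =>
      ((integrable_map_measure hcond hΦ.aemeasurable).mp integrable_condExp).integrableOn) ?_
    (stronglyMeasurable_condExp.comp_measurable
      (Measurable.of_comap_le le_rfl)).aestronglyMeasurable
  rintro _ ⟨t, ht, rfl⟩ _
  rw [← setIntegral_map (h𝒢 t ht) hcond hΦ.aemeasurable,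
    ← setIntegral_map (h𝒢 t ht) hF.1 hΦ.aemeasurable]
  exact setIntegral_condExp h𝒢 hF ht

theorem eLpNorm_condExp_comp_sub_integral_eq_map (hΦ : Measurable Φ) (h𝒢 : 𝒢 ≤ mX)
    (hF : Integrable F (μ.map Φ)) (r : ℝ≥0∞) :
    eLpNorm (fun ω => μ[fun ω' => F (Φ ω') | 𝒢.comap Φ] ω - ∫ ω', F (Φ ω') ∂μ) r μ
      = eLpNorm (fun x => (μ.map Φ)[F|𝒢] x - ∫ x, F x ∂μ.map Φ) r (μ.map Φ) := by
  have hdev : AEStronglyMeasurable (fun x => (μ.map Φ)[F|𝒢] x - ∫ x, F x ∂μ.map Φ) (μ.map Φ) :=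
    (stronglyMeasurable_condExp.mono h𝒢).aestronglyMeasurable.sub aestronglyMeasurable_const
  rw [eLpNorm_map_measure hdev hΦ.aemeasurable, integral_map hΦ.aemeasurable hF.1]
  refine eLpNorm_congr_ae ?_
  filter_upwards [condExp_comp_ae_eq hΦ h𝒢 hF] with ω hω
  simp [hω]

theorem eLpNorm_condExp_comp_sub_integral_eq_of_map_eq {Ψ : Ω → X} (hΦ : Measurable Φ)
    (hΨ : Measurable Ψ) (hlaw : μ.map Φ = μ.map Ψ) (h𝒢 : 𝒢 ≤ mX)
    (hF : Integrable F (μ.map Φ)) (r : ℝ≥0∞) :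
    eLpNorm (fun ω => μ[fun ω' => F (Φ ω') | 𝒢.comap Φ] ω - ∫ ω', F (Φ ω') ∂μ) r μ
      = eLpNorm (fun ω => μ[fun ω' => F (Ψ ω') | 𝒢.comap Ψ] ω - ∫ ω', F (Ψ ω') ∂μ) r μ := by
  rw [eLpNorm_condExp_comp_sub_integral_eq_map hΦ h𝒢 hF, hlaw,
    eLpNorm_condExp_comp_sub_integral_eq_map hΨ h𝒢 (hlaw ▸ hF)]

end CondExpComp

section Coupling

variable {Ω : Type*} {m m' : MeasurableSpace Ω} [mΩ : MeasurableSpace Ω] {μ : Measure Ω}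

theorem condExp_sub_integral_ae_eq_condExp_sub_of_indep [IsProbabilityMeasure μ] {Y Y' : Ω → ℝ}
    (hm : m ≤ mΩ) (hm' : m' ≤ mΩ) (hY'm : StronglyMeasurable[m'] Y') (hindep : Indep m' m μ)
    (hY : Integrable Y μ) (hY' : Integrable Y' μ) (hmean : ∫ ω, Y' ω ∂μ = ∫ ω, Y ω ∂μ) :
    (fun ω => μ[Y|m] ω - ∫ ω', Y ω' ∂μ) =ᵐ[μ] μ[Y - Y'|m] := by
  filter_upwards [condExp_sub hY hY' m, condExp_indep_eq hm' hm hY'm hindep] with ω hsub hconst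
  rw [hsub, Pi.sub_apply, hconst, hmean]

theorem eLpNorm_condExp_le_sum_of_abs_le {ι : Type*} {t : Finset ι} {X : Ω → ℝ}
    {Z : ι → Ω → ℝ} (hX : Integrable X μ) (hZ : ∀ i ∈ t, Integrable (Z i) μ)
    (hXZ : ∀ᵐ ω ∂μ, |X ω| ≤ ∑ i ∈ t, Z i ω) {r : ℝ≥0∞} (hr : 1 ≤ r) :
    eLpNorm (μ[X|m]) r μ ≤ ∑ i ∈ t, eLpNorm (μ[Z i|m]) r μ := by
  have hXZ' : |X| ≤ᵐ[μ] ∑ i ∈ t, Z i := by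
    filter_upwards [hXZ] with ω h
    simpa [Finset.sum_apply] using h
  have hdom : ∀ᵐ ω ∂μ, ‖μ[X|m] ω‖ ≤ ‖(∑ i ∈ t, μ[Z i|m]) ω‖ := by
    filter_upwards [abs_condExp_ae_le_condExp_abs (m := m) X,
      condExp_mono (m := m) hX.abs (integrable_finsetSum' t hZ) hXZ',
      condExp_finsetSum hZ m] with ω habs hmono hsum
    rw [Real.norm_eq_abs, Real.norm_eq_abs, ← hsum]
    exact habs.trans (hmono.trans (le_abs_self _))
  calc eLpNorm (μ[X|m]) r μ ≤ eLpNorm (∑ i ∈ t, μ[Z i|m]) r μ := eLpNorm_mono_ae hdom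
    _ ≤ ∑ i ∈ t, eLpNorm (μ[Z i|m]) r μ :=
      eLpNorm_sum_le (fun _ _ => integrable_condExp.aestronglyMeasurable) hr

theorem lipschitzWith_of_abs_sub_le_sum {l : ℕ} {f : (Fin l → ℝ) → ℝ}
    (hf : ∀ x y, |f x - f y| ≤ ∑ i, |x i - y i|) : LipschitzWith l f :=
  LipschitzWith.of_dist_le_mul fun x y => by
    calc dist (f x) (f y) ≤ ∑ i, dist (x i) (y i) := hf x y
      _ ≤ ∑ _i : Fin l, dist x y := Finset.sum_le_sum fun i _ => dist_le_pi_dist x y i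
      _ = l * dist x y := by simp

theorem memLp_comp_of_abs_sub_le_sum [IsFiniteMeasure μ] {l : ℕ} {f : (Fin l → ℝ) → ℝ}
    (hf : ∀ x y, |f x - f y| ≤ ∑ i, |x i - y i|) {U : Ω → Fin l → ℝ} {r : ℝ≥0∞}
    (hU : ∀ s, MemLp (fun ω => U ω s) r μ) : MemLp (fun ω => f (U ω)) r μ := by
  have hf0 : LipschitzWith l fun x => f x - f 0 :=
    lipschitzWith_of_abs_sub_le_sum fun x y => by simpa using hf x y
  convert (hf0.comp_memLp (by simp) (memLp_pi_iff.2 hU)).add (memLp_const (f 0)) using 1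
  ext ω
  simp

theorem eLpNorm_condExp_sub_integral_le_of_indep_copy [IsProbabilityMeasure μ] (hm : m ≤ mΩ)
    {l : ℕ} {U V : Ω → Fin l → ℝ} (hV : Measurable V) (hlaw : IdentDistrib V U μ μ)
    (hindep : Indep (MeasurableSpace.comap V inferInstance) m μ)
    (hUint : ∀ s, Integrable (fun ω => U ω s) μ) {f : (Fin l → ℝ) → ℝ}
    (hf : ∀ x y, |f x - f y| ≤ ∑ i, |x i - y i|) {r : ℝ≥0∞} (hr : 1 ≤ r) :
    eLpNorm (fun ω => μ[fun ω' => f (U ω') | m] ω - ∫ ω', f (U ω') ∂μ) r μ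
      ≤ ∑ s, eLpNorm (μ[fun ω => |U ω s - V ω s| | m]) r μ := by
  have hcont : Continuous f := (lipschitzWith_of_abs_sub_le_sum hf).continuous
  have hVint : ∀ s, Integrable (fun ω => V ω s) μ := fun s =>
    (hlaw.comp (measurable_pi_apply s)).integrable_iff.2 (hUint s)
  have hfU : Integrable (fun ω => f (U ω)) μ := memLp_one_iff_integrable.1 <|
    memLp_comp_of_abs_sub_le_sum hf fun s => memLp_one_iff_integrable.2 (hUint s)
  have hfV : Integrable (fun ω => f (V ω)) μ := memLp_one_iff_integrable.1 <|
    memLp_comp_of_abs_sub_le_sum hf fun s => memLp_one_iff_integrable.2 (hVint s)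
  have hfVm : StronglyMeasurable[MeasurableSpace.comap V inferInstance] fun ω => f (V ω) :=
    (hcont.measurable.comp (Measurable.of_comap_le le_rfl)).stronglyMeasurable
  rw [eLpNorm_congr_ae (condExp_sub_integral_ae_eq_condExp_sub_of_indep hm
    hV.comap_le hfVm hindep hfU hfV (hlaw.comp hcont.measurable).integral_eq)]
  exact eLpNorm_condExp_le_sum_of_abs_le (hfU.sub hfV)
    (fun s _ => ((hUint s).sub (hVint s)).abs) (ae_of_all _ fun ω => hf (U ω) (V ω)) hr

end Coupling

theorem theta2Seq_le_of_forall_theta2Coef_le {Ω : Type*} [MeasurableSpace Ω] {P : Measure Ω}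
    {ℳ : ℤ → MeasurableSpace Ω} {ξ : ℤ → Ω → ℝ} {n : ℕ} {c : ℝ} (hc : 0 ≤ c)
    (h : ∀ (l : ℕ) (p : ℤ) (j : Fin l → ℤ), (∀ s, p + (n : ℤ) ≤ j s) →
      theta2Coef P (ℳ p) (fun ω s => ξ (j s) ω) ≤ l * c) :
    theta2Seq P ℳ ξ n ≤ c := by
  refine Real.sSup_le ?_ hc
  rintro _ ⟨k, -, rfl⟩
  refine Real.sSup_le ?_ hc
  rintro _ ⟨l, hl, -, p, j, -, hj, rfl⟩
  have hl0 : (0 : ℝ) < l := by exact_mod_cast hl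
  calc 1 / (l : ℝ) * theta2Coef P (ℳ p) (fun ω s => ξ (j s) ω) ≤ 1 / l * (l * c) := by
        gcongr; exact h l p j hj
    _ = c := by field_simp

section Stationary

variable {Ω : Type*} [MeasurableSpace Ω]

theorem natFilt_eq_comap (ξ : ℤ → Ω → ℝ) (i : ℤ) :
    natFilt ξ i =
      MeasurableSpace.comap (fun ω k => ξ k ω) (natFilt (fun k (x : ℤ → ℝ) => x k) i) := by
  simp only [natFilt, MeasurableSpace.comap_iSup, MeasurableSpace.comap_comp]
  rfl

theorem natFilt_shift (ξ : ℤ → Ω → ℝ) (i p : ℤ) :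
    natFilt (fun k => ξ (k + p)) i = natFilt ξ (i + p) := by
  apply le_antisymm
  · exact iSup₂_le fun k hk => le_iSup₂_of_le (k + p) (by omega) le_rfl
  · refine iSup₂_le fun k hk => le_iSup₂_of_le (k - p) (by omega) ?_
    simp

theorem eLpNorm_condExp_natFilt_sub_integral_eq_shift {μ : Measure Ω} [IsFiniteMeasure μ]
    {ξ : ℤ → Ω → ℝ} (hξ : ∀ i, Measurable (ξ i))
    (hstat : ∀ p : ℤ, IdentDistrib (fun ω i => ξ (i + p) ω) (fun ω i => ξ i ω) μ μ)
    {l : ℕ} {f : (Fin l → ℝ) → ℝ} (hf : Measurable f) (j : Fin l → ℤ) (p : ℤ)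
    (hfξ : Integrable (fun ω => f fun s => ξ (j s - p) ω) μ) (r : ℝ≥0∞) :
    eLpNorm (fun ω => μ[fun ω' => f (fun s => ξ (j s) ω') | natFilt ξ p] ω
        - ∫ ω', f (fun s => ξ (j s) ω') ∂μ) r μ
      = eLpNorm (fun ω => μ[fun ω' => f (fun s => ξ (j s - p) ω') | natFilt ξ 0] ω
        - ∫ ω', f (fun s => ξ (j s - p) ω') ∂μ) r μ := by
  set F : (ℤ → ℝ) → ℝ := fun x => f fun s => x (j s - p) with hFdef
  have hF : Measurable F := hf.comp (measurable_pi_lambda _ fun s => measurable_pi_apply _)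
  have hΞ : Measurable fun ω (i : ℤ) => ξ i ω := measurable_pi_lambda _ hξ
  have hΞp : Measurable fun ω (i : ℤ) => ξ (i + p) ω := measurable_pi_lambda _ fun i => hξ _
  have hcoord : natFilt (fun k (x : ℤ → ℝ) => x k) 0 ≤ MeasurableSpace.pi :=
    iSup₂_le fun k _ => (measurable_pi_apply k).comap_le
  have hFint : Integrable F (μ.map fun ω i => ξ (i + p) ω) := by
    rw [(hstat p).map_eq]
    exact (integrable_map_measure hF.aestronglyMeasurable hΞ.aemeasurable).2 hfξ
  have hp : natFilt ξ p =
      MeasurableSpace.comap (fun ω i => ξ (i + p) ω) (natFilt (fun k (x : ℤ → ℝ) => x k) 0) := by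
    rw [← natFilt_eq_comap, natFilt_shift, zero_add]
  have key := eLpNorm_condExp_comp_sub_integral_eq_of_map_eq hΞp hΞ (hstat p).map_eq hcoord
    hFint r
  simp only [hFdef, sub_add_cancel] at key
  rw [hp, natFilt_eq_comap ξ 0, key]

theorem theta2Coef_natFilt_le_of_indep_copy {μ : Measure Ω} [IsProbabilityMeasure μ]
    {ξ ξ' : ℤ → Ω → ℝ} (hξ : ∀ i, Measurable (ξ i)) (hξ' : ∀ i, Measurable (ξ' i))
    (hL2 : ∀ i, MemLp (ξ i) 2 μ)
    (hstat : ∀ p : ℤ, IdentDistrib (fun ω i => ξ (i + p) ω) (fun ω i => ξ i ω) μ μ)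
    (hlaw : IdentDistrib (fun ω i => ξ' i ω) (fun ω i => ξ i ω) μ μ)
    (hindep : Indep (⨆ i, MeasurableSpace.comap (ξ' i) inferInstance) (natFilt ξ 0) μ)
    {l : ℕ} (p : ℤ) (j : Fin l → ℤ) :
    theta2Coef μ (natFilt ξ p) (fun ω s => ξ (j s) ω) ≤
      ∑ s, (eLpNorm (μ[fun ω => |ξ (j s - p) ω - ξ' (j s - p) ω| | natFilt ξ 0]) 2 μ).toReal := by
  have hlag : Measurable fun (x : ℤ → ℝ) (s : Fin l) => x (j s - p) :=
    measurable_pi_lambda _ fun s => measurable_pi_apply _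
  have hL2' : ∀ i, MemLp (ξ' i) 2 μ := fun i =>
    ((hlaw.comp (measurable_pi_apply i)).memLp_iff).2 (hL2 i)
  have hV : MeasurableSpace.comap (fun ω (s : Fin l) => ξ' (j s - p) ω) inferInstance ≤
      ⨆ i, MeasurableSpace.comap (ξ' i) inferInstance := by
    simp only [MeasurableSpace.pi, MeasurableSpace.comap_iSup, MeasurableSpace.comap_comp]
    exact iSup_le fun s => le_iSup_of_le (j s - p) le_rfl
  have hnat : natFilt ξ 0 ≤ ‹MeasurableSpace Ω› :=
    iSup₂_le fun i _ => (hξ i).comap_le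
  refine Real.sSup_le ?_ (Finset.sum_nonneg fun _ _ => ENNReal.toReal_nonneg)
  rintro _ ⟨f, hf, hflip, rfl⟩
  have hfξ : Integrable (fun ω => f fun s => ξ (j s - p) ω) μ := memLp_one_iff_integrable.1 <|
    memLp_comp_of_abs_sub_le_sum hflip fun s => (hL2 _).mono_exponent one_le_two
  have hfin : ∀ s,
      eLpNorm (μ[fun ω => |ξ (j s - p) ω - ξ' (j s - p) ω| | natFilt ξ 0]) 2 μ ≠ ∞ := fun s =>
    ((((hL2 _).sub (hL2' _)).abs).condExp one_le_two).eLpNorm_ne_top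
  rw [eLpNorm_condExp_natFilt_sub_integral_eq_shift hξ hstat hf j p hfξ,
    ← ENNReal.toReal_sum fun s _ => hfin s]
  refine ENNReal.toReal_mono (ENNReal.sum_ne_top.2 fun s _ => hfin s) ?_
  exact eLpNorm_condExp_sub_integral_le_of_indep_copy hnat
    (measurable_pi_lambda _ fun s => hξ' _) (hlaw.comp hlag)
    (indep_of_indep_of_le_left hindep hV)
    (fun s => (hL2 _).integrable one_le_two) hflip one_le_two

end Stationary

theorem measurable_of_causal {Ω S : Type*} [MeasurableSpace S] {m : MeasurableSpace Ω}
    {H : (ℕ → S) → ℝ} (hH : Measurable H) {e : ℤ → Ω → S} {ξn : Ω → ℝ} {n : ℤ}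
    (he : ∀ k ≤ n, Measurable[m] (e k)) (hξ : ∀ ω, ξn ω = H fun j : ℕ => e (n - j) ω) :
    Measurable[m] ξn := by
  rw [funext hξ]
  exact hH.comp (measurable_pi_lambda _ fun j => he _ (by omega))

section Causal

variable {Ω S : Type*} [MeasurableSpace Ω] [MeasurableSpace S] {P : Measure Ω}
  {H : (ℕ → S) → ℝ}

theorem map_shift_eq_self {ν : Measure (ℤ → S)} (hν : ν.map (fun x i => x (i + 1)) = ν)
    (p : ℤ) : ν.map (fun x i => x (i + p)) = ν := by
  have hτ : ∀ q : ℤ, Measurable fun (x : ℤ → S) i => x (i + q) := fun q =>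
    measurable_pi_lambda _ fun i => measurable_pi_apply _
  have hcomp : ∀ a b : ℤ, ((fun x i => x (i + a)) ∘ fun (x : ℤ → S) i => x (i + b)) =
      fun x i => x (i + (a + b)) := fun a b => by
    funext x i
    simp only [Function.comp_apply, add_assoc]
  induction p using Int.induction_on with
  | zero => simp
  | succ k ih => rw [← hcomp, ← Measure.map_map (hτ k) (hτ 1), hν, ih]
  | pred k ih =>
    nth_rw 1 [← hν]
    rw [Measure.map_map (hτ _) (hτ 1), hcomp, sub_add_cancel, ih]

theorem identDistrib_of_causal {e e' : ℤ → Ω → S} {ξ ξ' : ℤ → Ω → ℝ} (hH : Measurable H)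
    (hξ : ∀ n ω, ξ n ω = H fun m : ℕ => e (n - m) ω)
    (hξ' : ∀ n ω, ξ' n ω = H fun m : ℕ => e' (n - m) ω)
    (he : IdentDistrib (fun ω i => e' i ω) (fun ω i => e i ω) P P) :
    IdentDistrib (fun ω i => ξ' i ω) (fun ω i => ξ i ω) P P := by
  have hΓ : Measurable fun (x : ℤ → S) (n : ℤ) => H fun m : ℕ => x (n - m) :=
    measurable_pi_lambda _ fun n => hH.comp (measurable_pi_lambda _ fun m => measurable_pi_apply _)
  convert he.comp hΓ using 1 <;> funext ω n <;> simp [hξ, hξ']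

theorem identDistrib_shift_of_causal {e : ℤ → Ω → S} {ξ : ℤ → Ω → ℝ}
    (he : ∀ i, Measurable (e i))
    (hstat : P.map (fun ω i => e (i + 1) ω) = P.map (fun ω i => e i ω)) (hH : Measurable H)
    (hξ : ∀ n ω, ξ n ω = H fun m : ℕ => e (n - m) ω) (p : ℤ) :
    IdentDistrib (fun ω i => ξ (i + p) ω) (fun ω i => ξ i ω) P P := by
  have hΦ : Measurable fun ω (i : ℤ) => e i ω := measurable_pi_lambda _ he
  have hshift : ∀ q : ℤ, P.map (fun ω i => e (i + q) ω)
      = (P.map fun ω i => e i ω).map fun x i => x (i + q) := fun q => by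
    rw [Measure.map_map (measurable_pi_lambda _ fun i => measurable_pi_apply _) hΦ]
    rfl
  refine identDistrib_of_causal (e' := fun i => e (i + p)) hH hξ (fun n ω => ?_)
    ⟨(measurable_pi_lambda _ fun i => he _).aemeasurable, hΦ.aemeasurable, ?_⟩
  · simp only [hξ, sub_add_eq_add_sub]
  · rw [hshift p, map_shift_eq_self (by rw [← hshift 1, hstat]) p]

end Causal

/-- **Example 1 (causal functions of stationary sequences).** Let `(ε_i)_{i∈ℤ}` be a
stationary sequence with values in a measurable space `S`, `H` measurable with
`ξ_n = H(ε_n, ε_{n-1}, …)` square-integrable. If `(ε´_i)` is distributed as `(ε_i)` and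
independent of `(ε_i)_{i≤0}`, `ξ*_n = H(ε´_n, ε´_{n-1}, …)`, `ℳ_i = σ(ξ_j, j ≤ i)`, and
`(δ₂(i))_{i>0}` is non-increasing with `‖E(|ξ_i - ξ*_i| | ℳ₀)‖₂ ≤ δ₂(i)`, then
`θ₂(i) ≤ δ₂(i)` for all `i ≥ 1`. -/
theorem theta2_causal_function_le
    {Ω : Type*} [MeasurableSpace Ω] (P : Measure Ω) [IsProbabilityMeasure P]
    {S : Type*} [MeasurableSpace S]
    (e eP : ℤ → Ω → S)
    (hemeas : ∀ i, Measurable (e i)) (hePmeas : ∀ i, Measurable (eP i))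
    -- stationarity of `(ε_i)`
    (hstat : Measure.map (fun ω (i : ℤ) => e (i + 1) ω) P =
      Measure.map (fun ω (i : ℤ) => e i ω) P)
    -- `(ε´_i)` is distributed as `(ε_i)`
    (hident : Measure.map (fun ω (i : ℤ) => eP i ω) P =
      Measure.map (fun ω (i : ℤ) => e i ω) P)
    -- `(ε´_i)_{i∈ℤ}` is independent of `(ε_i)_{i≤0}`
    (hindep : Indep (⨆ i : ℤ, MeasurableSpace.comap (eP i) inferInstance)
      (⨆ i : ℤ, ⨆ _ : i ≤ 0, MeasurableSpace.comap (e i) inferInstance) P)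
    (H : (ℕ → S) → ℝ) (hH : Measurable H)
    (ξ ξstar : ℤ → Ω → ℝ)
    (hξ : ∀ n ω, ξ n ω = H (fun m : ℕ => e (n - m) ω))
    (hξstar : ∀ n ω, ξstar n ω = H (fun m : ℕ => eP (n - m) ω))
    (hξL2 : ∀ n, MemLp (ξ n) 2 P)
    (δ₂ : ℕ → ℝ)
    (hδmono : ∀ i j : ℕ, 1 ≤ i → i ≤ j → δ₂ j ≤ δ₂ i)
    (hδbd : ∀ i : ℕ, 1 ≤ i →
      (eLpNorm (P[(fun ω => |ξ i ω - ξstar i ω|) | natFilt ξ 0]) 2 P).toReal ≤ δ₂ i) :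
    ∀ i : ℕ, 1 ≤ i → theta2Seq P (natFilt ξ) ξ i ≤ δ₂ i := by
  intro n hn
  have hξm : ∀ i, Measurable (ξ i) := fun i =>
    measurable_of_causal hH (fun k _ => hemeas k) (hξ i)
  have hξstarm : ∀ i, Measurable (ξstar i) := fun i =>
    measurable_of_causal hH (fun k _ => hePmeas k) (hξstar i)
  have hpast : natFilt ξ 0 ≤ ⨆ i : ℤ, ⨆ _ : i ≤ 0, MeasurableSpace.comap (e i) inferInstance :=
    iSup₂_le fun i hi => (measurable_of_causal hH (fun k hk =>
      Measurable.of_comap_le (le_iSup₂_of_le k (hk.trans hi) le_rfl)) (hξ i)).comap_le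
  have hfuture : ⨆ i, MeasurableSpace.comap (ξstar i) inferInstance ≤
      ⨆ i : ℤ, MeasurableSpace.comap (eP i) inferInstance :=
    iSup_le fun i => (measurable_of_causal hH (fun k _ => Measurable.of_comap_le
      (le_iSup (fun i => MeasurableSpace.comap (eP i) _) k)) (hξstar i)).comap_le
  have hlaw : IdentDistrib (fun ω i => ξstar i ω) (fun ω i => ξ i ω) P P :=
    identDistrib_of_causal hH hξ hξstar ⟨(measurable_pi_lambda _ hePmeas).aemeasurable,
      (measurable_pi_lambda _ hemeas).aemeasurable, hident⟩
  refine theta2Seq_le_of_forall_theta2Coef_le (ENNReal.toReal_nonneg.trans (hδbd n hn))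
    fun l p j hj => (theta2Coef_natFilt_le_of_indep_copy hξm hξstarm hξL2
      (identDistrib_shift_of_causal hemeas hstat hH hξ) hlaw
      (indep_of_indep_of_le_right (indep_of_indep_of_le_left hindep hfuture) hpast) p j).trans ?_
  calc ∑ s, _ ≤ ∑ _s : Fin l, δ₂ n := Finset.sum_le_sum fun s _ => ?_
    _ = l * δ₂ n := by simp
  obtain ⟨k, hk⟩ : ∃ k : ℕ, j s - p = k := ⟨(j s - p).toNat, by have := hj s; omega⟩
  have hnk : n ≤ k := by have := hj s; omega
  rw [hk]
  exact (hδbd k (hn.trans hnk)).trans (hδmono n k hn hnk)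
end
end

section
/- Let 0 < ε < 1 and δ_ε = (1 − ε² + 2ε)/2. There exists κ_ε ≥ 1 such that for every integer v ≥ κ_ε the following holds. Let m = [v^ε], let b_1, …, b_v be non-negative real numbers, and define B = { u ∈ ℕ : (v − [v^{δ_ε}])/2 ≤ um ≤ v/2 } and A = { u ∈ ℕ : 0 ≤ u ≤ v and Σ_{i=um+1}^{(u+1)m} b_i ≤ (m/v)^ε Σ_{i=1}^v b_i }. Then the cardinality of A ∩ B satisfies |A ∩ B| ≥ (v^{(1−ε²)/2}/2)(1 − 4 v^{−(1−ε)²/2}) − 3/2; in particular κ_ε can be chosen large enough that A ∩ B is nonempty for all v ≥ κ_ε. -/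
/-!
The blocks `(u m, (u + 1) m]` with `u ∈ B` are disjoint and lie in `[1, v]`, so by Markov's
inequality at most `(v / m) ^ ε ≤ 2 v ^ (ε - ε²)` of them carry more than the fraction
`(m / v) ^ ε` of the total mass. Since `B` is an interval of about `v ^ δ / (2 m)` integers, and
`v ^ δ / (2 m) ≥ v ^ ((1 - ε²) / 2) / 2 - 1 / 2`, the remaining blocks number at least the stated
bound, which tends to infinity with `v`.
-/

open Filter Finset Function Topology

theorem pairwise_disjoint_Icc_mul_succ_mul (m : ℕ) :
    Pairwise (Disjoint on fun u : ℕ => Icc (u * m + 1) ((u + 1) * m)) := by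
  intro u u' huu'
  wlog hlt : u < u' generalizing u u'
  · exact (this huu'.symm (by omega)).symm
  have : (u + 1) * m ≤ u' * m := Nat.mul_le_mul_right _ hlt
  simp only [onFun, disjoint_left, mem_Icc]
  omega

section OrderedField

variable {K : Type*} [Field K] [LinearOrder K] [IsStrictOrderedRing K] [FloorSemiring K]

theorem Nat.half_le_floor {y : K} (hy : 1 ≤ y) : y / 2 ≤ ⌊y⌋₊ := by
  have h1 : (1 : K) ≤ ⌊y⌋₊ := by exact_mod_cast Nat.one_le_floor_iff y |>.mpr hy
  linarith [Nat.lt_floor_add_one y]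

theorem setOf_le_mul_le_eq_Icc {L R : K} {m : ℕ} (hm : 0 < m) (hR : 0 ≤ R) :
    {u : ℕ | L ≤ u * m ∧ (u * m : K) ≤ R} = ↑(Icc ⌈L / m⌉₊ ⌊R / m⌋₊) := by
  have hm' : (0 : K) < m := by exact_mod_cast hm
  ext u
  simp only [Set.mem_ofPred_eq, coe_Icc, Set.mem_Icc, Nat.ceil_le,
    Nat.le_floor_iff (div_nonneg hR hm'.le), div_le_iff₀ hm', le_div_iff₀ hm']

theorem sub_sub_one_le_card_Icc_ceil_floor {x y : K} (hx : 0 ≤ x) :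
    y - x - 1 ≤ #(Icc ⌈x⌉₊ ⌊y⌋₊) := by
  rw [Nat.card_Icc]
  have hceil := Nat.ceil_lt_add_one hx
  have hfloor := Nat.lt_floor_add_one y
  have : ((⌊y⌋₊ + 1 : ℕ) : K) ≤ ((⌊y⌋₊ + 1 - ⌈x⌉₊ : ℕ) : K) + ⌈x⌉₊ := by
    exact_mod_cast le_tsub_add
  push_cast at this
  linarith

end OrderedField

section Markov

variable {ι α K : Type*} [DecidableEq α] [Field K] [LinearOrder K] [IsStrictOrderedRing K]
  {s : Finset ι} {T : Finset α} {I : ι → Finset α} {b : α → K}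

theorem card_filter_lt_mul_le_one (hb : ∀ i ∈ T, 0 ≤ b i) (hI : (s : Set ι).PairwiseDisjoint I)
    (hIT : ∀ u ∈ s, I u ⊆ T) (t : K) :
    #{u ∈ s | t * ∑ i ∈ T, b i < ∑ i ∈ I u, b i} * t ≤ 1 := by
  set S := ∑ i ∈ T, b i
  set D := {u ∈ s | t * S < ∑ i ∈ I u, b i}
  have hblock : ∀ u ∈ s, ∑ i ∈ I u, b i ≤ S := fun u hu =>
    sum_le_sum_of_subset_of_nonneg (hIT u hu) fun i hi _ => hb i hi
  rcases D.eq_empty_or_nonempty with hD | ⟨u₀, hu₀⟩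
  · simp [hD]
  have hS : 0 < S := by
    obtain ⟨hu₀s, hu₀⟩ := mem_filter.mp hu₀
    by_contra! hS
    rw [le_antisymm hS (sum_nonneg hb), mul_zero] at hu₀
    linarith [hblock u₀ hu₀s]
  refine le_of_mul_le_mul_right ?_ hS
  calc (#D * t) * S = ∑ _u ∈ D, t * S := by rw [sum_const, nsmul_eq_mul, mul_assoc]
    _ ≤ ∑ u ∈ D, ∑ i ∈ I u, b i := sum_le_sum fun u hu => (mem_filter.mp hu).2.le
    _ = ∑ i ∈ D.biUnion I, b i := (sum_biUnion (hI.subset (filter_subset _ s))).symm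
    _ ≤ S := sum_le_sum_of_subset_of_nonneg
          (biUnion_subset.mpr fun u hu => hIT u (mem_filter.mp hu).1) fun i hi _ => hb i hi
    _ = 1 * S := (one_mul S).symm

theorem card_sub_inv_le_card_filter_le_mul (hb : ∀ i ∈ T, 0 ≤ b i)
    (hI : (s : Set ι).PairwiseDisjoint I) (hIT : ∀ u ∈ s, I u ⊆ T) {t : K} (ht : 0 < t) :
    (#s : K) - t⁻¹ ≤ #{u ∈ s | ∑ i ∈ I u, b i ≤ t * ∑ i ∈ T, b i} := by
  have hbad : (#{u ∈ s | ¬ ∑ i ∈ I u, b i ≤ t * ∑ i ∈ T, b i} : K) ≤ t⁻¹ := by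
    rw [inv_eq_one_div, le_div_iff₀ ht]
    simpa only [not_le] using card_filter_lt_mul_le_one hb hI hIT t
  have hsplit := card_filter_add_card_filter_not (s := s)
    fun u => ∑ i ∈ I u, b i ≤ t * ∑ i ∈ T, b i
  rw [← hsplit, Nat.cast_add]
  linarith

end Markov

theorem div_floor_rpow_rpow_le {ε x : ℝ} (hε0 : 0 ≤ ε) (hε1 : ε ≤ 1) (hx : 1 ≤ x) :
    (x / ⌊x ^ ε⌋₊) ^ ε ≤ 2 * x ^ (ε - ε ^ 2) := by
  have hx0 : 0 < x := by linarith
  have hxε : 1 ≤ x ^ ε := Real.one_le_rpow hx hε0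
  have hm := Nat.half_le_floor hxε
  have hdiv : x / ⌊x ^ ε⌋₊ ≤ 2 * x ^ (1 - ε) := by
    rw [div_le_iff₀ (by linarith), Real.rpow_sub hx0, Real.rpow_one]
    field_simp
    nlinarith
  calc (x / ⌊x ^ ε⌋₊) ^ ε ≤ (2 * x ^ (1 - ε)) ^ ε := by gcongr
    _ = 2 ^ ε * x ^ (ε - ε ^ 2) := by
      rw [Real.mul_rpow zero_le_two (by positivity), ← Real.rpow_mul hx0.le]
      ring_nf
    _ ≤ 2 * x ^ (ε - ε ^ 2) := by
      gcongr
      simpa using Real.rpow_le_rpow_of_exponent_le one_le_two hε1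

theorem sub_le_floor_rpow_div_floor_rpow {ε δ x : ℝ} (hε0 : 0 ≤ ε) (hε1 : ε ≤ 1)
    (hδ : δ = (1 - ε ^ 2 + 2 * ε) / 2) (hx : 1 ≤ x) :
    x ^ ((1 - ε ^ 2) / 2) / 2 - 1 / 2 ≤ (⌊x ^ δ⌋₊ : ℝ) / (2 * ⌊x ^ ε⌋₊) := by
  have hx0 : 0 < x := by linarith
  have hxε : 1 ≤ x ^ ε := Real.one_le_rpow hx hε0
  have hm : (1 : ℝ) ≤ ⌊x ^ ε⌋₊ := by exact_mod_cast Nat.one_le_floor_iff _ |>.mpr hxε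
  have hsplit : x ^ δ = x ^ ((1 - ε ^ 2) / 2) * x ^ ε := by
    rw [← Real.rpow_add hx0, hδ]
    ring_nf
  have hδ1 : 1 ≤ x ^ δ := Real.one_le_rpow hx (by nlinarith)
  calc x ^ ((1 - ε ^ 2) / 2) / 2 - 1 / 2 ≤ x ^ ((1 - ε ^ 2) / 2) / 2 - 1 / (2 * x ^ ε) := by
        gcongr
        linarith
    _ = (x ^ δ - 1) / (2 * x ^ ε) := by
        rw [hsplit]
        field_simp
    _ ≤ (⌊x ^ δ⌋₊ : ℝ) / (2 * ⌊x ^ ε⌋₊) := by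
        gcongr
        · linarith [Nat.lt_floor_add_one (x ^ δ)]
        · exact Nat.floor_le (by positivity)

noncomputable def goodBlockBound (ε x : ℝ) : ℝ :=
  x ^ ((1 - ε ^ 2) / 2) / 2 * (1 - 4 * x ^ (-(1 - ε) ^ 2 / 2)) - 3 / 2

theorem goodBlockBound_le {ε δ x : ℝ} (hε0 : 0 ≤ ε) (hε1 : ε ≤ 1)
    (hδ : δ = (1 - ε ^ 2 + 2 * ε) / 2) (hx : 1 ≤ x) :
    goodBlockBound ε x ≤ (⌊x ^ δ⌋₊ : ℝ) / (2 * ⌊x ^ ε⌋₊) - 1 - (x / ⌊x ^ ε⌋₊) ^ ε := by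
  have hbad := div_floor_rpow_rpow_le hε0 hε1 hx
  have hgood := sub_le_floor_rpow_div_floor_rpow hε0 hε1 hδ hx
  have hsplit : x ^ ((1 - ε ^ 2) / 2) * x ^ (-(1 - ε) ^ 2 / 2) = x ^ (ε - ε ^ 2) := by
    rw [← Real.rpow_add (by linarith)]
    ring_nf
  unfold goodBlockBound
  linarith

theorem eventually_goodBlockBound_pos {ε : ℝ} (h₀ : -1 < ε) (h₁ : ε < 1) :
    ∀ᶠ x : ℝ in atTop, 0 < goodBlockBound ε x := by
  have hP : Tendsto (fun x : ℝ => x ^ ((1 - ε ^ 2) / 2)) atTop atTop :=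
    tendsto_rpow_atTop (by nlinarith)
  have hQ : Tendsto (fun x : ℝ => x ^ (-(1 - ε) ^ 2 / 2)) atTop (𝓝 0) := by
    simpa only [neg_div] using tendsto_rpow_neg_atTop (by nlinarith : 0 < (1 - ε) ^ 2 / 2)
  have hlim : Tendsto (fun x : ℝ => 1 - 4 * x ^ (-(1 - ε) ^ 2 / 2)) atTop (𝓝 1) := by
    simpa using (hQ.const_mul 4).const_sub 1
  exact (((hP.atTop_div_const two_pos).atTop_mul_pos one_pos hlim).atTop_add
    tendsto_const_nhds).eventually_gt_atTop 0

theorem two_mul_floor_rpow_le_self {ε x : ℝ} (hx : 1 ≤ x) (h : 2 ≤ x ^ (1 - ε)) :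
    2 * (⌊x ^ ε⌋₊ : ℝ) ≤ x := calc
  2 * (⌊x ^ ε⌋₊ : ℝ) ≤ x ^ (1 - ε) * x ^ ε := by
      gcongr
      exact Nat.floor_le (by positivity)
  _ = x := by rw [← Real.rpow_add (by linarith), sub_add_cancel, Real.rpow_one]

theorem succ_mul_le_of_mul_le_half {u m v : ℕ} (hmv : 2 * m ≤ v) (h : (u * m : ℝ) ≤ v / 2) :
    (u + 1) * m ≤ v := by
  have : (2 * m : ℝ) ≤ v := by exact_mod_cast hmv
  have : (((u + 1) * m : ℕ) : ℝ) ≤ v := by push_cast; linarith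
  exact_mod_cast this

theorem div_sub_one_sub_rpow_le_ncard_good_blocks (ε : ℝ) {v m W : ℕ} (hm : 0 < m)
    (hmv : 2 * m ≤ v) (hW : W ≤ v) {b : ℕ → ℝ} (hb : ∀ i, 0 ≤ b i) :
    (W : ℝ) / (2 * m) - 1 - ((v : ℝ) / m) ^ ε ≤
      ({u : ℕ | u ≤ v ∧ ∑ i ∈ Icc (u * m + 1) ((u + 1) * m), b i ≤
          ((m : ℝ) / v) ^ ε * ∑ i ∈ Icc 1 v, b i} ∩
        {u : ℕ | ((v : ℝ) - W) / 2 ≤ u * m ∧ (u * m : ℝ) ≤ v / 2}).ncard := by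
  have hm' : (0 : ℝ) < m := by exact_mod_cast hm
  have hv' : (0 : ℝ) < v := by exact_mod_cast (by omega : 0 < v)
  have hW' : (W : ℝ) ≤ v := by exact_mod_cast hW
  set s := Icc ⌈((v : ℝ) - W) / 2 / m⌉₊ ⌊(v : ℝ) / 2 / m⌋₊
  have hB := setOf_le_mul_le_eq_Icc (L := ((v : ℝ) - W) / 2) hm (by positivity : (0 : ℝ) ≤ v / 2)
  have hblock : ∀ u ∈ s, (u + 1) * m ≤ v := fun u hu =>
    succ_mul_le_of_mul_le_half hmv (hB.symm.subset (mem_coe.mpr hu)).2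
  rw [hB]
  have hgood : {u : ℕ | u ≤ v ∧ ∑ i ∈ Icc (u * m + 1) ((u + 1) * m), b i ≤
          ((m : ℝ) / v) ^ ε * ∑ i ∈ Icc 1 v, b i} ∩ ↑s =
      ↑{u ∈ s | ∑ i ∈ Icc (u * m + 1) ((u + 1) * m), b i ≤
        ((m : ℝ) / v) ^ ε * ∑ i ∈ Icc 1 v, b i} := by
    ext u
    simp only [coe_filter, Set.mem_inter_iff, Set.mem_ofPred_eq, mem_coe]
    exact ⟨fun ⟨⟨_, h⟩, hu⟩ => ⟨hu, h⟩,
      fun ⟨hu, h⟩ => ⟨⟨by nlinarith [hblock u hu], h⟩, hu⟩⟩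
  rw [hgood, Set.ncard_coe_finset]
  have hcount := card_sub_inv_le_card_filter_le_mul (s := s) (T := Icc 1 v)
    (fun i _ => hb i) ((pairwise_disjoint_Icc_mul_succ_mul m).set_pairwise _)
    (fun u hu i hi => by
      have := hblock u hu
      simp only [mem_Icc] at hi ⊢
      omega)
    (Real.rpow_pos_of_pos (div_pos hm' hv') ε)
  rw [← Real.inv_rpow (div_pos hm' hv').le, inv_div] at hcount
  have hs := sub_sub_one_le_card_Icc_ceil_floor (y := (v : ℝ) / 2 / m)
    (by positivity : 0 ≤ ((v : ℝ) - W) / 2 / m)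
  have : (v : ℝ) / 2 / m - ((v : ℝ) - W) / 2 / m = W / (2 * m) := by field_simp; ring
  linarith

/-- **Counting lemma (after Utev, 1991).** Let `0 < ε < 1` and `δ_ε = (1 - ε² + 2ε)/2`.
There exists `κ_ε ≥ 1` such that for every integer `v ≥ κ_ε` the following holds. With
`m = [v^ε]`, for non-negative reals `b_1, …, b_v`, setting
`B = {u ∈ ℕ : (v - [v^{δ_ε}])/2 ≤ um ≤ v/2}` and
`A = {u ∈ ℕ : u ≤ v ∧ ∑_{i=um+1}^{(u+1)m} b_i ≤ (m/v)^ε ∑_{i=1}^v b_i}`, one has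
`|A ∩ B| ≥ (v^{(1-ε²)/2}/2)(1 - 4 v^{-(1-ε)²/2}) - 3/2`, and `A ∩ B` is nonempty. -/
theorem good_block_exists
    (ε : ℝ) (hε0 : 0 < ε) (hε1 : ε < 1)
    (δ : ℝ) (hδ : δ = (1 - ε ^ 2 + 2 * ε) / 2) :
    ∃ κ : ℝ, 1 ≤ κ ∧
      ∀ v : ℕ, κ ≤ (v : ℝ) →
        ∀ b : ℕ → ℝ, (∀ i, 0 ≤ b i) →
          ∀ m : ℕ, m = ⌊(v : ℝ) ^ ε⌋₊ →
            ∀ A B : Set ℕ,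
              B = {u : ℕ | ((v : ℝ) - ⌊(v : ℝ) ^ δ⌋₊) / 2 ≤ u * m ∧ (u * m : ℝ) ≤ v / 2} →
              A = {u : ℕ | u ≤ v ∧
                  ∑ i ∈ Finset.Icc (u * m + 1) ((u + 1) * m), b i ≤
                    ((m : ℝ) / v) ^ ε * ∑ i ∈ Finset.Icc 1 v, b i} →
              ((v : ℝ) ^ ((1 - ε ^ 2) / 2) / 2) * (1 - 4 * (v : ℝ) ^ (-(1 - ε) ^ 2 / 2)) -
                  3 / 2 ≤ ((A ∩ B).ncard : ℝ) ∧
                (A ∩ B).Nonempty := by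
  have hgap := (tendsto_rpow_atTop (sub_pos.2 hε1)).eventually_ge_atTop 2
  have hbound := eventually_goodBlockBound_pos (by linarith : -1 < ε) hε1
  obtain ⟨κ, hκ⟩ := eventually_atTop.mp ((eventually_ge_atTop 1).and (hgap.and hbound))
  refine ⟨max κ 1, le_max_right _ _, fun v hv b hb m hm A B hB hA => ?_⟩
  obtain ⟨hv1, hv2, hpos⟩ := hκ v (le_of_max_le_left hv)
  subst hm hA hB
  have hm0 : 0 < ⌊(v : ℝ) ^ ε⌋₊ := Nat.floor_pos.2 (Real.one_le_rpow hv1 hε0.le)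
  have hmv : 2 * ⌊(v : ℝ) ^ ε⌋₊ ≤ v := by exact_mod_cast two_mul_floor_rpow_le_self hv1 hv2
  have hWv : ⌊(v : ℝ) ^ δ⌋₊ ≤ v := Nat.floor_le_of_le <| by
    simpa using Real.rpow_le_rpow_of_exponent_le hv1 (by nlinarith : δ ≤ 1)
  have hlower := (goodBlockBound_le hε0.le hε1.le hδ hv1).trans
    (div_sub_one_sub_rpow_le_ncard_good_blocks ε hm0 hmv hWv hb)
  exact ⟨hlower, Set.nonempty_of_ncard_ne_zero (by exact_mod_cast (hpos.trans_le hlower).ne')⟩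
end
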